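/- arXiv:1512.05230 — 2 statements merged into one kernel-verified Lean document; each statement's English description precedes it below -/
import Mathlib

section
/- Let n ≥ 3. At every point of the open set Ω_n, the Fréchet derivative of the map g̃_n : ℝ^(6n−9) → ℝ^(4n−6) is surjective (has full rank 3(n−2) + n); in particular 0 is a regular value of the restriction of g̃_n to Ω_n, so that the solution set T̃_n = {x ∈ Ω_n : g̃_n(x) = 0} is locally the zero set of a submersion and has dimension 2n − 3. -/
open Real

/-- The spherical law of cosines map `g_3`, as a vector in `ℝ³`. -/
noncomputable def gThree (a b c α β γ : ℝ) : Fin 3 → ℝ :=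
  ![Real.cos b * Real.cos c + Real.sin b * Real.sin c * Real.cos α - Real.cos a,
    Real.cos c * Real.cos a + Real.sin c * Real.sin a * Real.cos β - Real.cos b,
    Real.cos a * Real.cos b + Real.sin a * Real.sin b * Real.cos γ - Real.cos c]

/-- The domain `ℝ^(6n−9)` of `g̃_n`, as the product of the spaces of the variables
`σ ∈ ℝⁿ`, `δ ∈ ℝⁿ`, `α, β, γ ∈ ℝ^(n−2)` and `c ∈ ℝ^(n−3)`. -/
abbrev ConeDom (n : ℕ) :=
  (Fin n → ℝ) × (Fin n → ℝ) × (Fin (n - 2) → ℝ) × (Fin (n - 2) → ℝ) ×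
    (Fin (n - 2) → ℝ) × (Fin (n - 3) → ℝ)

/-- The extended diagonal-length vector, with the conventions `c_0 := σ_1` and
`c_{n−2} := σ_n` (in 0-based indexing: `C 0 = σ 0`, `C (n-2) = σ (n-1)`, and
`C j = c (j-1)` for `0 < j < n-2`). -/
noncomputable def cExt (n : ℕ) (hn : 3 ≤ n) (σ : Fin n → ℝ) (c : Fin (n - 3) → ℝ)
    (j : ℕ) : ℝ :=
  if j = 0 then σ ⟨0, by omega⟩
  else if j = n - 2 then σ ⟨n - 1, by omega⟩
  else if hj : j - 1 < n - 3 then c ⟨j - 1, hj⟩ else 0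

/-- The map `g̃_n : ℝ^(6n−9) → ℝ^(3(n−2)+n)`: for each `i = 1, …, n−2` (0-based
`i = 0, …, n−3`) the triple `g_3(σ_{i+1}, c_{i−1}, c_i, α_i, β_i, γ_i)`, together with the
`n` scalars `δ_1 − (α_1 + ⋯ + α_{n−2})`, `δ_2 − γ_1`, `δ_j − β_{j−2} − γ_{j−1}` for
`j = 3, …, n−1`, and `δ_n − β_{n−2}` (all written here in 0-based indexing). -/
noncomputable def gTilde (n : ℕ) (hn : 3 ≤ n) (x : ConeDom n) :
    (Fin (n - 2) → Fin 3 → ℝ) × (Fin n → ℝ) :=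
  let σ := x.1
  let δ := x.2.1
  let α := x.2.2.1
  let β := x.2.2.2.1
  let γ := x.2.2.2.2.1
  let c := x.2.2.2.2.2
  (fun i => gThree (σ ⟨i.1 + 1, by have := i.2; omega⟩)
      (cExt n hn σ c i.1) (cExt n hn σ c (i.1 + 1)) (α i) (β i) (γ i),
   fun j =>
     if j.1 = 0 then δ j - ∑ i, α i
     else if j.1 = 1 then δ j - γ ⟨0, by omega⟩
     else if hl : j.1 = n - 1 then δ j - β ⟨n - 3, by omega⟩
     else δ j - β ⟨j.1 - 2, by have := j.2; omega⟩ - γ ⟨j.1 - 1, by have := j.2; omega⟩)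

/-- The open set `Ω_n`: `σ ∈ (0,π)ⁿ`, `δ ∈ (0,2π)ⁿ`, each triple `(α_i, β_i, γ_i)` in
`(0,π)³ ∪ (π,2π)³`, and `c ∈ (0,π)^(n−3)`. -/
def OmegaCone (n : ℕ) (x : ConeDom n) : Prop :=
  (∀ i, x.1 i ∈ Set.Ioo 0 π) ∧
  (∀ i, x.2.1 i ∈ Set.Ioo 0 (2 * π)) ∧
  (∀ i, (x.2.2.1 i ∈ Set.Ioo 0 π ∧ x.2.2.2.1 i ∈ Set.Ioo 0 π ∧
           x.2.2.2.2.1 i ∈ Set.Ioo 0 π) ∨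
        (x.2.2.1 i ∈ Set.Ioo π (2 * π) ∧ x.2.2.2.1 i ∈ Set.Ioo π (2 * π) ∧
           x.2.2.2.2.1 i ∈ Set.Ioo π (2 * π))) ∧
  (∀ i, x.2.2.2.2.2 i ∈ Set.Ioo 0 π)

/-! Only the angle and `δ` directions are needed. On `Ω_n` every sine occurring in `g̃_n` is
nonzero, and moving `α_i`, `β_i`, `γ_i` moves the three components of the `i`-th triple
independently, at rates `-sin b sin c sin α`, `-sin c sin a sin β`, `-sin a sin b sin γ`; so the
triples can be given any derivative. The remaining `n` components are linear in `x`, with `δ`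
entering with coefficient one and not entering the triples, so `δ` then fixes them. -/

lemma surjective_fderiv_of_forall_hasLineDerivAt {𝕜 E F : Type*} [NontriviallyNormedField 𝕜]
    [NormedAddCommGroup E] [NormedSpace 𝕜 E] [NormedAddCommGroup F] [NormedSpace 𝕜 F]
    {f : E → F} {x : E} (hf : DifferentiableAt 𝕜 f x)
    (h : ∀ y, ∃ v, HasLineDerivAt 𝕜 f y x v) : Function.Surjective (fderiv 𝕜 f x) := fun y =>
  let ⟨v, hv⟩ := h y
  ⟨v, (hf.hasFDerivAt.hasLineDerivAt v).unique hv⟩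

lemma HasLineDerivAt.prodMk {𝕜 E F G : Type*} [NontriviallyNormedField 𝕜] [AddCommGroup E]
    [Module 𝕜 E] [NormedAddCommGroup F] [NormedSpace 𝕜 F] [NormedAddCommGroup G]
    [NormedSpace 𝕜 G] {f : E → F} {g : E → G} {f' : F} {g' : G} {x v : E}
    (hf : HasLineDerivAt 𝕜 f f' x v) (hg : HasLineDerivAt 𝕜 g g' x v) :
    HasLineDerivAt 𝕜 (fun y => (f y, g y)) (f', g') x v :=
  HasDerivAt.prodMk hf hg

lemma sin_ne_zero_of_mem_Ioo_or {t : ℝ} (h : t ∈ Set.Ioo 0 π ∨ t ∈ Set.Ioo π (2 * π)) :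
    sin t ≠ 0 := by
  rcases h with ⟨h0, hπ⟩ | ⟨hπ, h2π⟩
  · exact (sin_pos_of_pos_of_lt_pi h0 hπ).ne'
  · have : 0 < sin (t - π) := sin_pos_of_pos_of_lt_pi (by linarith) (by linarith)
    rw [sin_sub_pi] at this
    exact (neg_pos.mp this).ne

lemma hasDerivAt_gThree_angles (a b c α β γ p q r : ℝ) :
    HasDerivAt (fun t => gThree a b c (α + t * p) (β + t * q) (γ + t * r))
      ![-(sin b * sin c * sin α) * p, -(sin c * sin a * sin β) * q,
        -(sin a * sin b * sin γ) * r] 0 := by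
  have hcos : ∀ (u v w θ s : ℝ), HasDerivAt (fun t => u + v * cos (θ + t * s) - w)
      (-(v * sin θ) * s) 0 := fun u v w θ s => by
    refine ((((hasDerivAt_mul_const (x := (0 : ℝ)) s).const_add θ).cos.const_mul v).const_add
      u).sub_const w |>.congr_deriv ?_
    simp only [zero_mul, add_zero]
    ring
  rw [hasDerivAt_pi]
  intro k
  fin_cases k
  · simpa [gThree, mul_assoc] using hcos (cos b * cos c) (sin b * sin c) (cos a) α p
  · simpa [gThree, mul_assoc] using hcos (cos c * cos a) (sin c * sin a) (cos b) β q
  · simpa [gThree, mul_assoc] using hcos (cos a * cos b) (sin a * sin b) (cos c) γ r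

lemma exists_hasDerivAt_gThree_angles {a b c α β γ : ℝ} (ha : sin a ≠ 0) (hb : sin b ≠ 0)
    (hc : sin c ≠ 0) (hα : sin α ≠ 0) (hβ : sin β ≠ 0) (hγ : sin γ ≠ 0) (u : Fin 3 → ℝ) :
    ∃ p q r : ℝ, HasDerivAt (fun t => gThree a b c (α + t * p) (β + t * q) (γ + t * r)) u 0 := by
  refine ⟨-u 0 / (sin b * sin c * sin α), -u 1 / (sin c * sin a * sin β),
    -u 2 / (sin a * sin b * sin γ), (hasDerivAt_gThree_angles ..).congr_deriv ?_⟩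
  ext k
  fin_cases k <;>
    simp only [Fin.zero_eta, Fin.mk_one, Fin.reduceFinMk, Matrix.cons_val, Matrix.cons_val_zero,
      Matrix.cons_val_one] <;>
    field_simp

lemma cExt_mem {n : ℕ} (hn : 3 ≤ n) {σ : Fin n → ℝ} {c : Fin (n - 3) → ℝ} {s : Set ℝ}
    (hσ : ∀ i, σ i ∈ s) (hc : ∀ i, c i ∈ s) {j : ℕ} (hj : j ≤ n - 2) : cExt n hn σ c j ∈ s := by
  unfold cExt
  split_ifs
  · exact hσ _
  · exact hσ _
  · exact hc _
  · omega

noncomputable def gTildeSnd (n : ℕ) (hn : 3 ≤ n) : ConeDom n →ₗ[ℝ] (Fin n → ℝ) where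
  toFun x := (gTilde n hn x).2
  map_add' x y := by
    funext j
    simp only [gTilde, Prod.fst_add, Prod.snd_add, Pi.add_apply, Finset.sum_add_distrib]
    split_ifs <;> ring
  map_smul' t x := by
    funext j
    simp only [gTilde, Prod.smul_fst, Prod.smul_snd, Pi.smul_apply, smul_eq_mul,
      ← Finset.mul_sum, RingHom.id_apply]
    split_ifs <;> ring

lemma gTildeSnd_apply (n : ℕ) (hn : 3 ≤ n) (x : ConeDom n) :
    gTildeSnd n hn x = (gTilde n hn x).2 := rfl

lemma gTildeSnd_delta (n : ℕ) (hn : 3 ≤ n) (d : Fin n → ℝ) :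
    gTildeSnd n hn (0, d, 0, 0, 0, 0) = d := by
  funext j
  simp only [gTildeSnd_apply, gTilde, Pi.zero_apply, Finset.sum_const_zero]
  split_ifs <;> ring

lemma Differentiable.gThree {E : Type*} [NormedAddCommGroup E] [NormedSpace ℝ E]
    {a b c α β γ : E → ℝ} (ha : Differentiable ℝ a) (hb : Differentiable ℝ b)
    (hc : Differentiable ℝ c) (hα : Differentiable ℝ α) (hβ : Differentiable ℝ β)
    (hγ : Differentiable ℝ γ) :
    Differentiable ℝ (fun y => gThree (a y) (b y) (c y) (α y) (β y) (γ y)) := by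
  rw [differentiable_pi]
  intro k
  fin_cases k <;> simp only [_root_.gThree, Fin.zero_eta, Fin.mk_one, Fin.reduceFinMk,
    Matrix.cons_val] <;> fun_prop

lemma differentiable_gTilde (n : ℕ) (hn : 3 ≤ n) : Differentiable ℝ (gTilde n hn) := by
  have hC : ∀ j, Differentiable ℝ (fun x : ConeDom n => cExt n hn x.1 x.2.2.2.2.2 j) := by
    intro j
    unfold cExt
    split_ifs <;> fun_prop
  refine Differentiable.prodMk ?_ (gTildeSnd n hn).toContinuousLinearMap.differentiable
  refine differentiable_pi.mpr fun i => Differentiable.gThree ?_ (hC _) (hC _) ?_ ?_ ?_ <;>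
    fun_prop

lemma exists_hasLineDerivAt_gTilde_fst {n : ℕ} (hn : 3 ≤ n) {x : ConeDom n}
    (hσ : ∀ i, sin (x.1 i) ≠ 0) (hα : ∀ i, sin (x.2.2.1 i) ≠ 0) (hβ : ∀ i, sin (x.2.2.2.1 i) ≠ 0)
    (hγ : ∀ i, sin (x.2.2.2.2.1 i) ≠ 0) (hc : ∀ i, sin (x.2.2.2.2.2 i) ≠ 0)
    (u : Fin (n - 2) → Fin 3 → ℝ) :
    ∃ p q r : Fin (n - 2) → ℝ, ∀ d : Fin n → ℝ,
      HasLineDerivAt ℝ (fun y => (gTilde n hn y).1) u x (0, d, p, q, r, 0) := by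
  have hC : ∀ j ≤ n - 2, sin (cExt n hn x.1 x.2.2.2.2.2 j) ≠ 0 := fun j hj =>
    cExt_mem (s := {t | sin t ≠ 0}) hn hσ hc hj
  choose p q r hpqr using fun i : Fin (n - 2) =>
    exists_hasDerivAt_gThree_angles (hσ ⟨i + 1, by omega⟩) (hC i (by omega))
      (hC (i + 1) (by omega)) (hα i) (hβ i) (hγ i) (u i)
  refine ⟨p, q, r, fun d => hasDerivAt_pi.mpr fun i => ?_⟩
  refine (hpqr i).congr_of_eventuallyEq (Filter.Eventually.of_forall fun t => ?_)
  simp [gTilde]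

/-- for `n ≥ 3`, at every point of `Ω_n` the Fréchet derivative of `g̃_n`
is surjective (full rank `3(n−2) + n`); in particular `0` is a regular value of the
restriction of `g̃_n` to `Ω_n`. -/
theorem stmt_8 (n : ℕ) (hn : 3 ≤ n) (x : ConeDom n) (hx : OmegaCone n x) :
    Function.Surjective ⇑(fderiv ℝ (gTilde n hn) x) := by
  obtain ⟨hσ, -, hαβγ, hc⟩ := hx
  have hsin : ∀ {t}, t ∈ Set.Ioo 0 π → sin t ≠ 0 := fun ht => sin_ne_zero_of_mem_Ioo_or (.inl ht)
  have hfst := exists_hasLineDerivAt_gTilde_fst hn (fun i => hsin (hσ i))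
    (fun i => sin_ne_zero_of_mem_Ioo_or ((hαβγ i).imp (·.1) (·.1)))
    (fun i => sin_ne_zero_of_mem_Ioo_or ((hαβγ i).imp (·.2.1) (·.2.1)))
    (fun i => sin_ne_zero_of_mem_Ioo_or ((hαβγ i).imp (·.2.2) (·.2.2)))
    (fun i => hsin (hc i))
  refine surjective_fderiv_of_forall_hasLineDerivAt (differentiable_gTilde n hn x)
    fun ⟨u, w⟩ => ?_
  obtain ⟨p, q, r, hu⟩ := hfst u
  set L := gTildeSnd n hn
  set d := w - L (0, 0, p, q, r, 0)
  have hw : L (0, d, p, q, r, 0) = w := by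
    rw [show ((0, d, p, q, r, 0) : ConeDom n) = (0, d, 0, 0, 0, 0) + (0, 0, p, q, r, 0) by simp,
      map_add, gTildeSnd_delta]
    exact sub_add_cancel _ _
  refine ⟨(0, d, p, q, r, 0), (hu d).prodMk ?_⟩
  rw [← hw]
  exact L.toContinuousLinearMap.hasFDerivAt.hasLineDerivAt _
end

section
/- Let n ≥ 3 and suppose (σ, δ, α, β, γ, c) and (σ, δ, α', β', γ', c') are two points of Ω_n with the same σ and δ components, both satisfying g̃_n = 0. Then α = α', β = β', γ = γ' and c = c'. In other words, the projection of the solution set T̃_n = {x ∈ Ω_n : g̃_n(x) = 0} onto the (σ,δ)-coordinates is injective: the auxiliary triangle angles α_i, β_i, γ_i and diagonal lengths c_i of a solution are uniquely determined by the face angles σ and the dihedral angles δ. -/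
open Real

open Real

/-!
Glue the triangles of the fan in order. The first triangle has known sides `σ_1 = c_0`,
`σ_2` and included angle `γ_1 = δ_2`; a spherical triangle is determined by two sides in
`(0,π)` and the included angle, so this fixes `c_1` and, via the cosine rule, `cos α_1` and
`cos β_1`. Since all three angles of a triangle lie on the same side of `π`, and the side of
`γ_1` is known, `α_1` and `β_1` are fixed too. Then `γ_2 = δ_3 − β_1` is known and the
argument repeats along the fan.
-/

open Set

lemma injOn_cos_Ioo_pi_two_pi : InjOn cos (Ioo π (2 * π)) := by
  intro x hx y hy h
  have hx' : 2 * π - x ∈ Icc 0 π := ⟨by linarith [hx.2], by linarith [hx.1]⟩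
  have hy' : 2 * π - y ∈ Icc 0 π := ⟨by linarith [hy.2], by linarith [hy.1]⟩
  have := injOn_cos hx' hy' (by rw [cos_two_pi_sub, cos_two_pi_sub, h])
  linarith

lemma cos_eq_of_add_sin_mul_sin_mul_cos_eq {b c θ θ' : ℝ} (hb : b ∈ Ioo 0 π)
    (hc : c ∈ Ioo 0 π)
    (h : cos b * cos c + sin b * sin c * cos θ = cos b * cos c + sin b * sin c * cos θ') :
    cos θ = cos θ' := by
  have hsin : sin b * sin c ≠ 0 :=
    (mul_pos (sin_pos_of_pos_of_lt_pi hb.1 hb.2) (sin_pos_of_pos_of_lt_pi hc.1 hc.2)).ne'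
  exact mul_left_cancel₀ hsin (add_left_cancel h)

def AngleTriple (α β γ : ℝ) : Prop :=
  (α ∈ Ioo 0 π ∧ β ∈ Ioo 0 π ∧ γ ∈ Ioo 0 π) ∨
    (α ∈ Ioo π (2 * π) ∧ β ∈ Ioo π (2 * π) ∧ γ ∈ Ioo π (2 * π))

lemma AngleTriple.eq_of_cos_eq {α β γ α' β' : ℝ} (hT : AngleTriple α β γ)
    (hT' : AngleTriple α' β' γ) (hα : cos α = cos α') (hβ : cos β = cos β') :
    α = α' ∧ β = β' := by
  rcases hT with ⟨ha, hb, hg⟩ | ⟨ha, hb, hg⟩ <;>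
    rcases hT' with ⟨ha', hb', hg'⟩ | ⟨ha', hb', hg'⟩
  · exact ⟨injOn_cos (Ioo_subset_Icc_self ha) (Ioo_subset_Icc_self ha') hα,
      injOn_cos (Ioo_subset_Icc_self hb) (Ioo_subset_Icc_self hb') hβ⟩
  · exact absurd hg.2 hg'.1.not_gt
  · exact absurd hg'.2 hg.1.not_gt
  · exact ⟨injOn_cos_Ioo_pi_two_pi ha ha' hα, injOn_cos_Ioo_pi_two_pi hb hb' hβ⟩

lemma gThree_eq_zero_iff {a b c α β γ : ℝ} :
    gThree a b c α β γ = 0 ↔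
      cos b * cos c + sin b * sin c * cos α = cos a ∧
      cos c * cos a + sin c * sin a * cos β = cos b ∧
      cos a * cos b + sin a * sin b * cos γ = cos c := by
  simp [gThree, funext_iff, Fin.forall_fin_succ, sub_eq_zero]

/-- Side-angle-side congruence of spherical triangles. -/
theorem gThree_eq_zero_sas_unique {a b c c' α β γ α' β' : ℝ} (ha : a ∈ Ioo 0 π)
    (hb : b ∈ Ioo 0 π) (hc : c ∈ Ioo 0 π) (hc' : c' ∈ Ioo 0 π)
    (hT : AngleTriple α β γ) (hT' : AngleTriple α' β' γ)
    (h : gThree a b c α β γ = 0) (h' : gThree a b c' α' β' γ = 0) :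
    c = c' ∧ α = α' ∧ β = β' := by
  obtain ⟨h₁, h₂, h₃⟩ := gThree_eq_zero_iff.1 h
  obtain ⟨h₁', h₂', h₃'⟩ := gThree_eq_zero_iff.1 h'
  obtain rfl : c = c' :=
    injOn_cos (Ioo_subset_Icc_self hc) (Ioo_subset_Icc_self hc') (h₃.symm.trans h₃')
  exact ⟨rfl, hT.eq_of_cos_eq hT'
    (cos_eq_of_add_sin_mul_sin_mul_cos_eq hb hc (h₁.trans h₁'.symm))
    (cos_eq_of_add_sin_mul_sin_mul_cos_eq hc ha (h₂.trans h₂'.symm))⟩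

section Cone

variable {n : ℕ} {hn : 3 ≤ n} {σ δ : Fin n → ℝ} {α β γ : Fin (n - 2) → ℝ}
  {c : Fin (n - 3) → ℝ}

lemma cExt_zero (c c' : Fin (n - 3) → ℝ) : cExt n hn σ c 0 = cExt n hn σ c' 0 := by
  simp [cExt]

lemma cExt_succ (i : Fin (n - 3)) : cExt n hn σ c (i + 1) = c i := by
  have h₁ : i.1 + 1 ≠ n - 2 := by omega
  simp [cExt, h₁]

lemma cExt_mem_Ioo (hσ : ∀ i, σ i ∈ Ioo 0 π) (hc : ∀ i, c i ∈ Ioo 0 π) {j : ℕ}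
    (hj : j ≤ n - 2) : cExt n hn σ c j ∈ Ioo 0 π := by
  unfold cExt
  split_ifs with h₀ h₁ h₂
  · exact hσ _
  · exact hσ _
  · exact hc _
  · omega

lemma OmegaCone.angleTriple (hx : OmegaCone n (σ, δ, α, β, γ, c)) (i : Fin (n - 2)) :
    AngleTriple (α i) (β i) (γ i) :=
  hx.2.2.1 i

lemma gThree_eq_zero_of_gTilde_eq_zero (hg : gTilde n hn (σ, δ, α, β, γ, c) = 0)
    (i : Fin (n - 2)) :
    gThree (σ ⟨i + 1, by omega⟩) (cExt n hn σ c i) (cExt n hn σ c (i + 1)) (α i) (β i) (γ i)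
      = 0 :=
  congrFun (congrArg Prod.fst hg) i

lemma gamma_zero_of_gTilde_eq_zero (hg : gTilde n hn (σ, δ, α, β, γ, c) = 0) :
    γ ⟨0, by omega⟩ = δ ⟨1, by omega⟩ := by
  have h := congrFun (congrArg Prod.snd hg) ⟨1, by omega⟩
  simp only [gTilde, Prod.snd_zero, Pi.zero_apply, one_ne_zero, ite_true, ite_false,
    sub_eq_zero] at h
  exact h.symm

lemma gamma_succ_of_gTilde_eq_zero (hg : gTilde n hn (σ, δ, α, β, γ, c) = 0) {i : ℕ}
    (hi : i + 1 < n - 2) :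
    γ ⟨i + 1, hi⟩ = δ ⟨i + 2, by omega⟩ - β ⟨i, by omega⟩ := by
  have h := congrFun (congrArg Prod.snd hg) ⟨i + 2, by omega⟩
  simp only [gTilde, Prod.snd_zero, Pi.zero_apply] at h
  rw [if_neg (by omega), if_neg (by omega), dif_neg (by omega)] at h
  simp only [Nat.add_sub_cancel, show i + 2 - 1 = i + 1 by omega] at h
  linarith

variable {α' β' γ' : Fin (n - 2) → ℝ} {c' : Fin (n - 3) → ℝ}

lemma triangle_eq_of_gTilde_eq_zero (hx : OmegaCone n (σ, δ, α, β, γ, c))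
    (hx' : OmegaCone n (σ, δ, α', β', γ', c')) (hg : gTilde n hn (σ, δ, α, β, γ, c) = 0)
    (hg' : gTilde n hn (σ, δ, α', β', γ', c') = 0) (i : Fin (n - 2)) (hγ : γ i = γ' i)
    (hC : cExt n hn σ c i = cExt n hn σ c' i) :
    cExt n hn σ c (i + 1) = cExt n hn σ c' (i + 1) ∧ α i = α' i ∧ β i = β' i := by
  have h' := gThree_eq_zero_of_gTilde_eq_zero hg' i
  rw [← hγ, ← hC] at h'
  exact gThree_eq_zero_sas_unique (hx.1 _) (cExt_mem_Ioo hx.1 hx.2.2.2 (by omega))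
    (cExt_mem_Ioo hx.1 hx.2.2.2 (by omega)) (cExt_mem_Ioo hx.1 hx'.2.2.2 (by omega))
    (hx.angleTriple i) (hγ ▸ hx'.angleTriple i) (gThree_eq_zero_of_gTilde_eq_zero hg i) h'

lemma gamma_eq_and_cExt_eq_of_gTilde_eq_zero (hx : OmegaCone n (σ, δ, α, β, γ, c))
    (hx' : OmegaCone n (σ, δ, α', β', γ', c')) (hg : gTilde n hn (σ, δ, α, β, γ, c) = 0)
    (hg' : gTilde n hn (σ, δ, α', β', γ', c') = 0) (i : ℕ) (hi : i < n - 2) :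
    γ ⟨i, hi⟩ = γ' ⟨i, hi⟩ ∧ cExt n hn σ c i = cExt n hn σ c' i := by
  induction i with
  | zero =>
    exact ⟨(gamma_zero_of_gTilde_eq_zero hg).trans (gamma_zero_of_gTilde_eq_zero hg').symm,
      cExt_zero c c'⟩
  | succ i ih =>
    obtain ⟨hγ, hC⟩ := ih (by omega)
    obtain ⟨hC', -, hβ⟩ := triangle_eq_of_gTilde_eq_zero hx hx' hg hg' ⟨i, by omega⟩ hγ hC
    refine ⟨?_, hC'⟩
    rw [gamma_succ_of_gTilde_eq_zero hg hi, gamma_succ_of_gTilde_eq_zero hg' hi, hβ]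

end Cone

/-- for `n ≥ 3`, if two points of `Ω_n` with the same `σ` and `δ` components
both satisfy `g̃_n = 0`, then their auxiliary components agree: the triangle angles
`α_i, β_i, γ_i` and diagonal lengths `c_i` of a solution are uniquely determined by the
face angles `σ` and the dihedral angles `δ`. -/
theorem stmt_9 (n : ℕ) (hn : 3 ≤ n) (σ δ : Fin n → ℝ)
    (α β γ α' β' γ' : Fin (n - 2) → ℝ) (c c' : Fin (n - 3) → ℝ)
    (hx : OmegaCone n (σ, δ, α, β, γ, c)) (hx' : OmegaCone n (σ, δ, α', β', γ', c'))
    (hg : gTilde n hn (σ, δ, α, β, γ, c) = 0)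
    (hg' : gTilde n hn (σ, δ, α', β', γ', c') = 0) :
    α = α' ∧ β = β' ∧ γ = γ' ∧ c = c' := by
  have hγC := gamma_eq_and_cExt_eq_of_gTilde_eq_zero hx hx' hg hg'
  have htri (i : Fin (n - 2)) :=
    triangle_eq_of_gTilde_eq_zero hx hx' hg hg' i (hγC i i.2).1 (hγC i i.2).2
  refine ⟨funext fun i => (htri i).2.1, funext fun i => (htri i).2.2,
    funext fun i => (hγC i i.2).1, funext fun i => ?_⟩
  rw [← cExt_succ (hn := hn) (σ := σ) (c := c), ← cExt_succ (hn := hn) (σ := σ) (c := c')]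
  exact (htri ⟨i, by omega⟩).1
end
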